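/- Let E = (V, C, σ), p ∈ Δ(V), q ∈ Δ(C), and for each candidate c let X_c be a minimal counterexample (a ⊆-minimal set with q(D(c, X_c)) < p(X_c), where D(c,S) = {c' : ∃ i ∈ S, c ⪰_i c'}), assuming every candidate has a counterexample. Let C* = argmax_c p(X_c), order C* by the partial order bRc iff X_b ⊇ X_c and b ≻_i c for all i ∈ X_c, and let a be a maximal element of C*. Then for every b ∉ D(a, X_a), the sets X_a and X_b are incomparable: X_a \ X_b ≠ ∅ and X_b \ X_a ≠ ∅. -/

import Mathlib

open Finset

open Classical in
noncomputable def weaklyDefeated {V C : Type*} [Fintype C] (σ : V → C → C → Prop) (c : C)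
    (S : Finset V) : Finset C :=
  univ.filter fun c' => ∃ i ∈ S, c = c' ∨ σ i c c'

section WeaklyDefeated

variable {V C : Type*} [Fintype C] {σ : V → C → C → Prop} {a b : C} {S : Finset V}

theorem mem_weaklyDefeated : b ∈ weaklyDefeated σ a S ↔ ∃ i ∈ S, a = b ∨ σ i a b := by
  simp [weaklyDefeated]

theorem self_mem_weaklyDefeated (hS : S.Nonempty) : a ∈ weaklyDefeated σ a S :=
  let ⟨i, hi⟩ := hS
  mem_weaklyDefeated.2 ⟨i, hi, Or.inl rfl⟩

theorem forall_lt_of_not_mem_weaklyDefeated [∀ i, Std.Trichotomous (σ i)]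
    (hb : b ∉ weaklyDefeated σ a S) : ∀ i ∈ S, σ i b a := by
  intro i hi
  rcases trichotomous_of (σ i) b a with hba | rfl | hab
  · exact hba
  all_goals exact absurd (mem_weaklyDefeated.2 ⟨i, hi, by tauto⟩) hb

theorem weaklyDefeated_subset_of_forall_lt [∀ i, IsTrans C (σ i)]
    (hba : ∀ i ∈ S, σ i b a) : weaklyDefeated σ a S ⊆ weaklyDefeated σ b S := by
  intro c hc
  obtain ⟨i, hi, rfl | hac⟩ := mem_weaklyDefeated.1 hc
  · exact mem_weaklyDefeated.2 ⟨i, hi, Or.inr (hba i hi)⟩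
  · exact mem_weaklyDefeated.2 ⟨i, hi, Or.inr (_root_.trans (hba i hi) hac)⟩

end WeaklyDefeated

open Classical in
theorem stmt19_general {V C : Type*} [Fintype V] [Fintype C]
    (σ : V → C → C → Prop) (hσ : ∀ i, IsStrictTotalOrder C (σ i))
    (p : V → ℝ) (q : C → ℝ)
    (hp0 : ∀ i, 0 ≤ p i) (hq0 : ∀ c, 0 ≤ q c)
    -- D c S is the set of candidates weakly defeated by c in some vote of S
    (D : C → Finset V → Finset C)
    (hD : ∀ c S, D c S = Finset.univ.filter (fun c' => ∃ i ∈ S, c = c' ∨ σ i c c'))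
    -- every candidate has a counterexample; X c is a fixed minimal one
    (X : C → Finset V)
    (hXce : ∀ c, ∑ c' ∈ D c (X c), q c' < ∑ i ∈ X c, p i)
    (hXmin : ∀ c, ∀ S ⊂ X c, ¬ (∑ c' ∈ D c S, q c' < ∑ i ∈ S, p i))
    (a : C)
    -- a's minimal counterexample has the largest p-weight
    (haC : ∀ c : C, ∑ i ∈ X c, p i ≤ ∑ i ∈ X a, p i)
    -- a is maximal in C* under the partial order R
    (hamax : ∀ b : C, (∑ i ∈ X b, p i = ∑ i ∈ X a, p i) →
      (X a ⊆ X b ∧ ∀ i ∈ X a, σ i b a) → b = a)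
    (b : C) (hb : b ∉ D a (X a)) :
    (X a \ X b).Nonempty ∧ (X b \ X a).Nonempty := by
  obtain rfl : D = weaklyDefeated σ := funext₂ hD
  have hXa : (X a).Nonempty := nonempty_of_sum_ne_zero
    ((sum_nonneg fun c _ => hq0 c).trans_lt (hXce a)).ne'
  have hba : ∀ i ∈ X a, σ i b a := forall_lt_of_not_mem_weaklyDefeated hb
  have hXab : ¬ X a ⊆ X b := by
    intro hsub
    have hab := hamax b ((haC b).antisymm (sum_le_sum_of_subset_of_nonneg hsub fun i _ _ => hp0 i))
      ⟨hsub, hba⟩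
    subst hab
    exact hb (self_mem_weaklyDefeated hXa)
  refine ⟨sdiff_nonempty.2 hXab, sdiff_nonempty.2 fun hsub => ?_⟩
  -- `b` beats `a` throughout `X b ⊆ X a`, so `X b` is also a counterexample for `a`.
  refine hXmin a (X b) (ssubset_of_subset_of_ne hsub fun h => hXab h.ge) ?_
  calc ∑ c ∈ weaklyDefeated σ a (X b), q c
      ≤ ∑ c ∈ weaklyDefeated σ b (X b), q c :=
        sum_le_sum_of_subset_of_nonneg
          (weaklyDefeated_subset_of_forall_lt fun i hi => hba i (hsub hi)) fun c _ _ => hq0 c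
    _ < ∑ i ∈ X b, p i := hXce b

open Classical in
/-- The incomparability lemma (Lemma 3.2 in the paper): with minimal
counterexamples `X c` for every candidate, a candidate `a` whose counterexample
has maximum `p`-weight and which is maximal under the partial order `R`, and any
`b` not weakly defeated by `a` in `X a`, the sets `X a` and `X b` are
incomparable. -/
theorem stmt19 {V C : Type*} [Fintype V] [Fintype C]
    (σ : V → C → C → Prop) (hσ : ∀ i, IsStrictTotalOrder C (σ i))
    (p : V → ℝ) (q : C → ℝ)
    (hp0 : ∀ i, 0 ≤ p i) (hq0 : ∀ c, 0 ≤ q c)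
    (hp1 : ∑ i, p i = 1) (hq1 : ∑ c, q c = 1)
    -- D c S is the set of candidates weakly defeated by c in some vote of S
    (D : C → Finset V → Finset C)
    (hD : ∀ c S, D c S = Finset.univ.filter (fun c' => ∃ i ∈ S, c = c' ∨ σ i c c'))
    -- every candidate has a counterexample; X c is a fixed minimal one
    (X : C → Finset V)
    (hXce : ∀ c, ∑ c' ∈ D c (X c), q c' < ∑ i ∈ X c, p i)
    (hXmin : ∀ c, ∀ S ⊂ X c, ¬ (∑ c' ∈ D c S, q c' < ∑ i ∈ S, p i))
    (a : C)
    -- a's minimal counterexample has the largest p-weight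
    (haC : ∀ c : C, ∑ i ∈ X c, p i ≤ ∑ i ∈ X a, p i)
    -- a is maximal in C* under the partial order R
    (hamax : ∀ b : C, (∑ i ∈ X b, p i = ∑ i ∈ X a, p i) →
      (X a ⊆ X b ∧ ∀ i ∈ X a, σ i b a) → b = a)
    (b : C) (hb : b ∉ D a (X a)) :
    (X a \ X b).Nonempty ∧ (X b \ X a).Nonempty :=
  stmt19_general σ hσ p q hp0 hq0 D hD X hXce hXmin a haC hamax b hb
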